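/- arXiv:2108.13744 — 2 statements merged into one kernel-verified Lean document; each statement's English description precedes it below -/
import Mathlib

section
/- Every Horn-NNF formula is logically equivalent to some Horn clausal formula; conversely, every Horn clausal formula is itself Horn-NNF. Hence the classes of Horn-NNF formulas and Horn clausal formulas are semantically equivalent. -/
inductive Lit (V : Type) where
  | pos (v : V)
  | neg (v : V)

def Lit.isPos {V : Type} : Lit V → Bool
  | .pos _ => true
  | .neg _ => false

inductive NNF (V : Type) where
  | lit (l : Lit V)
  | conj (φs : List (NNF V))
  | disj (φs : List (NNF V))

namespace NNF
variable {V : Type}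

/-- A formula is negative if all its literals are negative. -/
def negB : NNF V → Bool
  | .lit l => !l.isPos
  | .conj φs => φs.attach.all fun ⟨φ, _⟩ => negB φ
  | .disj φs => φs.attach.all fun ⟨φ, _⟩ => negB φ

/-- Horn-NNF: every disjunction subformula has at most one non-negative disjunct. -/
def hornB : NNF V → Bool
  | .lit _ => true
  | .conj φs => φs.attach.all fun ⟨φ, _⟩ => hornB φ
  | .disj φs => (φs.attach.all fun ⟨φ, _⟩ => hornB φ) &&
      decide ((φs.filter fun φ => !negB φ).length ≤ 1)

/-- Evaluation under an interpretation. -/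
def eval (I : V → Bool) : NNF V → Bool
  | .lit (.pos v) => I v
  | .lit (.neg v) => !I v
  | .conj φs => φs.attach.all fun ⟨φ, _⟩ => eval I φ
  | .disj φs => φs.attach.any fun ⟨φ, _⟩ => eval I φ

/-- Subformulas. -/
def subs : NNF V → List (NNF V)
  | .lit l => [.lit l]
  | .conj φs => .conj φs :: (φs.attach.flatMap fun ⟨φ, _⟩ => subs φ)
  | .disj φs => .disj φs :: (φs.attach.flatMap fun ⟨φ, _⟩ => subs φ)

/-- Clausal form by distribution. -/
def cl : NNF V → List (List (Lit V))
  | .lit l => [[l]]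
  | .conj φs => φs.attach.flatMap fun ⟨φ, _⟩ => cl φ
  | .disj φs => (φs.attach.map fun ⟨φ, _⟩ => cl φ).foldr
      (fun cs acc => cs.flatMap fun c => acc.map fun d => c ++ d) [[]]

def size : NNF V → Nat
  | .lit _ => 1
  | .conj φs => (φs.attach.map fun ⟨φ, _⟩ => size φ).sum
  | .disj φs => (φs.attach.map fun ⟨φ, _⟩ => size φ).sum

end NNF

def Lit.eval {V : Type} (I : V → Bool) : Lit V → Bool
  | .pos v => I v
  | .neg v => !I v

def Clause.eval {V : Type} (I : V → Bool) (c : List (Lit V)) : Bool :=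
  c.any fun l => l.eval I

def Clausal.eval {V : Type} (I : V → Bool) (cs : List (List (Lit V))) : Bool :=
  cs.all fun c => Clause.eval I c

def Clause.isHorn {V : Type} (c : List (Lit V)) : Prop :=
  (c.filter Lit.isPos).length ≤ 1

def Clausal.isHorn {V : Type} (cs : List (List (Lit V))) : Prop :=
  ∀ c ∈ cs, Clause.isHorn c

namespace HornProofAux
open NNF

variable {V : Type}

theorem nnf_ind {P : NNF V → Prop}
    (hl : ∀ l, P (.lit l))
    (hc : ∀ φs, (∀ φ ∈ φs, P φ) → P (.conj φs))
    (hd : ∀ φs, (∀ φ ∈ φs, P φ) → P (.disj φs)) :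
    ∀ φ, P φ
  | .lit l => hl l
  | .conj φs => hc φs fun φ h =>
      have : sizeOf φ < sizeOf (NNF.conj φs) := by
        have := List.sizeOf_lt_of_mem h; simp; omega
      nnf_ind hl hc hd φ
  | .disj φs => hd φs fun φ h =>
      have : sizeOf φ < sizeOf (NNF.disj φs) := by
        have := List.sizeOf_lt_of_mem h; simp; omega
      nnf_ind hl hc hd φ
termination_by φ => sizeOf φ

-- equation lemmas without attach
theorem negB_conj (φs : List (NNF V)) : negB (.conj φs) = φs.all negB := by
  rw [negB]; exact Bool.eq_iff_iff.mpr (by simp [List.all_eq_true])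
theorem negB_disj (φs : List (NNF V)) : negB (.disj φs) = φs.all negB := by
  rw [negB]; exact Bool.eq_iff_iff.mpr (by simp [List.all_eq_true])
theorem hornB_conj (φs : List (NNF V)) : hornB (.conj φs) = φs.all hornB := by
  rw [hornB]; exact Bool.eq_iff_iff.mpr (by simp [List.all_eq_true])
theorem hornB_disj (φs : List (NNF V)) :
    hornB (.disj φs) = (φs.all hornB && decide ((φs.filter fun φ => !negB φ).length ≤ 1)) := by
  rw [hornB]
  congr 1
  exact Bool.eq_iff_iff.mpr (by simp [List.all_eq_true])
theorem eval_conj (I : V → Bool) (φs : List (NNF V)) :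
    eval I (.conj φs) = φs.all (eval I) := by
  rw [eval]; exact Bool.eq_iff_iff.mpr (by simp [List.all_eq_true])
theorem eval_disj (I : V → Bool) (φs : List (NNF V)) :
    eval I (.disj φs) = φs.any (eval I) := by
  rw [eval]; exact Bool.eq_iff_iff.mpr (by simp [List.any_eq_true])

def cross (cs acc : List (List (Lit V))) : List (List (Lit V)) :=
  cs.flatMap fun c => acc.map fun d => c ++ d

theorem cl_conj (φs : List (NNF V)) : cl (.conj φs) = φs.flatMap cl := by
  rw [cl]; simp

theorem cl_disj (φs : List (NNF V)) : cl (.disj φs) = (φs.map cl).foldr cross [[]] := by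
  rw [cl]
  have : (φs.attach.map fun (x : {x // x ∈ φs}) => cl x.1) = φs.map cl := by simp
  rw [this]; rfl

theorem mem_cross {e : List (Lit V)} {cs acc : List (List (Lit V))} :
    e ∈ cross cs acc ↔ ∃ c ∈ cs, ∃ d ∈ acc, e = c ++ d := by
  simp [cross, eq_comm]

theorem clausal_eval_append (I : V → Bool) (cs ds : List (List (Lit V))) :
    Clausal.eval I (cs ++ ds) = (Clausal.eval I cs && Clausal.eval I ds) := by
  simp [Clausal.eval]

theorem clausal_eval_flatMap {α : Type} (I : V → Bool) (l : List α) (g : α → List (List (Lit V))) :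
    Clausal.eval I (l.flatMap g) = l.all fun a => Clausal.eval I (g a) := by
  exact Bool.eq_iff_iff.mpr (by simp [Clausal.eval, List.all_eq_true])

theorem clause_eval_append (I : V → Bool) (c d : List (Lit V)) :
    Clause.eval I (c ++ d) = (Clause.eval I c || Clause.eval I d) := by
  simp [Clause.eval]

theorem clausal_eval_cross (I : V → Bool) (cs acc : List (List (Lit V))) :
    Clausal.eval I (cross cs acc) = (Clausal.eval I cs || Clausal.eval I acc) := by
  refine Bool.eq_iff_iff.mpr ?_
  simp only [Clausal.eval, cross, List.all_eq_true, List.mem_flatMap, List.mem_map,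
    Bool.or_eq_true]
  constructor
  · intro h
    by_cases hc : ∀ c ∈ cs, Clause.eval I c = true
    · exact Or.inl hc
    · push_neg at hc
      obtain ⟨c, hcm, hcf⟩ := hc
      refine Or.inr fun d hd => ?_
      have := h (c ++ d) ⟨c, hcm, d, hd, rfl⟩
      rw [clause_eval_append] at this
      simp only [Bool.or_eq_true] at this
      tauto
  · rintro (h | h) e ⟨c, hcm, d, hd, rfl⟩ <;> rw [clause_eval_append] <;>
      simp only [Bool.or_eq_true]
    · exact Or.inl (h c hcm)
    · exact Or.inr (h d hd)

theorem clausal_eval_foldr (I : V → Bool) (css : List (List (List (Lit V)))) :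
    Clausal.eval I (css.foldr cross [[]]) = css.any (Clausal.eval I) := by
  induction css with
  | nil => simp [Clausal.eval, Clause.eval]
  | cons cs rest ih => simp [List.foldr_cons, clausal_eval_cross, ih]

theorem eval_cl (φ : NNF V) : ∀ I, eval I φ = Clausal.eval I (cl φ) := by
  induction φ using nnf_ind with
  | hl l => intro I; cases l <;> simp [eval, cl, Clausal.eval, Clause.eval, Lit.eval]
  | hc φs ih =>
    intro I
    rw [eval_conj, cl_conj, clausal_eval_flatMap]
    refine Bool.eq_iff_iff.mpr ?_
    simp only [List.all_eq_true]
    exact ⟨fun h a ha => by rw [← ih a ha I]; exact h a ha,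
           fun h a ha => by rw [ih a ha I]; exact h a ha⟩
  | hd φs ih =>
    intro I
    rw [eval_disj, cl_disj, clausal_eval_foldr]
    refine Bool.eq_iff_iff.mpr ?_
    simp only [List.any_eq_true, List.mem_map]
    constructor
    · rintro ⟨φ, hm, he⟩
      exact ⟨cl φ, ⟨φ, hm, rfl⟩, by rw [← ih φ hm I]; exact he⟩
    · rintro ⟨cs, ⟨φ, hm, rfl⟩, he⟩
      exact ⟨φ, hm, by rw [ih φ hm I]; exact he⟩

theorem neg_cl (φ : NNF V) (h : negB φ = true) :
    ∀ c ∈ cl φ, ∀ l ∈ c, l.isPos = false := by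
  induction φ using nnf_ind with
  | hl l =>
    intro c hc x hx
    simp [cl] at hc
    subst hc
    simp at hx
    subst hx
    simp [negB] at h
    exact h
  | hc φs ih =>
    rw [negB_conj, List.all_eq_true] at h
    intro c hc
    rw [cl_conj, List.mem_flatMap] at hc
    obtain ⟨φ, hm, hc⟩ := hc
    exact ih φ hm (h φ hm) c hc
  | hd φs ih =>
    rw [negB_disj, List.all_eq_true] at h
    rw [cl_disj]
    have : ∀ css : List (List (List (Lit V))),
        (∀ cs ∈ css, ∀ c ∈ cs, ∀ l ∈ c, l.isPos = false) →
        ∀ e ∈ css.foldr cross [[]], ∀ l ∈ e, l.isPos = false := by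
      intro css
      induction css with
      | nil => intro _ e he; simp at he; subst he; simp
      | cons cs rest ihr =>
        intro hall e he
        rw [List.foldr_cons, mem_cross] at he
        obtain ⟨c, hcm, d, hd, rfl⟩ := he
        intro l hl
        rcases List.mem_append.mp hl with hl | hl
        · exact hall cs (by simp) c hcm l hl
        · exact ihr (fun cs' h' => hall cs' (by simp [h'])) d hd l hl
    refine this _ ?_
    intro cs hcs
    rw [List.mem_map] at hcs
    obtain ⟨φ, hm, rfl⟩ := hcs
    exact ih φ hm (h φ hm)

theorem allneg_foldr (css : List (List (List (Lit V))))
    (hall : ∀ cs ∈ css, ∀ c ∈ cs, ∀ l ∈ c, l.isPos = false) :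
    ∀ e ∈ css.foldr cross [[]], ∀ l ∈ e, l.isPos = false := by
  induction css with
  | nil => intro e he; simp at he; subst he; simp
  | cons cs rest ihr =>
    intro e he
    rw [List.foldr_cons, mem_cross] at he
    obtain ⟨c, hcm, d, hd, rfl⟩ := he
    intro l hl
    rcases List.mem_append.mp hl with hl | hl
    · exact hall cs (by simp) c hcm l hl
    · exact ihr (fun cs' h' => hall cs' (by simp [h'])) d hd l hl

theorem horn_foldr : ∀ φs : List (NNF V),
    (∀ φ ∈ φs, Clausal.isHorn (cl φ)) →
    ((φs.filter fun φ => !negB φ).length ≤ 1) →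
    Clausal.isHorn ((φs.map cl).foldr cross [[]]) := by
  intro φs
  induction φs with
  | nil =>
    intro _ _ c hc
    simp at hc; subst hc; simp [Clause.isHorn]
  | cons φ rest ihr =>
    intro hh hcount e he
    rw [List.map_cons, List.foldr_cons, mem_cross] at he
    obtain ⟨c, hcm, d, hd, rfl⟩ := he
    unfold Clause.isHorn
    rw [List.filter_append, List.length_append]
    by_cases hn : negB φ = true
    · have hcneg : List.filter Lit.isPos c = [] := by
        rw [List.filter_eq_nil_iff]
        intro l hl
        simp [neg_cl φ hn c hcm l hl]
      rw [hcneg]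
      simp only [List.length_nil, Nat.zero_add]
      have hcount' : ((rest.filter fun φ => !negB φ).length ≤ 1) := by
        rw [List.filter_cons, if_neg (by simp [hn])] at hcount
        exact hcount
      exact ihr (fun ψ h => hh ψ (by simp [h])) hcount' d hd
    · have hrest0 : (rest.filter fun φ => !negB φ) = [] := by
        rw [List.filter_cons, if_pos (by simp [hn])] at hcount
        simp only [List.length_cons] at hcount
        exact List.length_eq_zero_iff.mp (by omega)
      have hrestneg : ∀ ψ ∈ rest, negB ψ = true := by
        intro ψ hm
        by_contra hne
        have hf : negB ψ = false := by revert hne; cases negB ψ <;> simp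
        have : ψ ∈ rest.filter fun φ => !negB φ :=
          List.mem_filter.mpr ⟨hm, by simp [hf]⟩
        rw [hrest0] at this; simp at this
      have hdneg : List.filter Lit.isPos d = [] := by
        rw [List.filter_eq_nil_iff]
        intro l hl
        have := allneg_foldr (rest.map cl)
          (fun cs' hcs' => by
            obtain ⟨ψ, hm, rfl⟩ := List.mem_map.mp hcs'
            exact neg_cl ψ (hrestneg ψ hm)) d hd l hl
        simp [this]
      rw [hdneg]
      simp only [List.length_nil, Nat.add_zero]
      have := hh φ (by simp) c hcm
      unfold Clause.isHorn at this
      omega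

theorem horn_cl (φ : NNF V) (h : hornB φ = true) : Clausal.isHorn (cl φ) := by
  induction φ using nnf_ind with
  | hl l =>
    intro c hc
    simp [cl] at hc
    subst hc
    unfold Clause.isHorn
    cases hl : l.isPos <;> simp [List.filter, hl]
  | hc φs ih =>
    rw [hornB_conj, List.all_eq_true] at h
    intro c hc
    rw [cl_conj, List.mem_flatMap] at hc
    obtain ⟨φ, hm, hc⟩ := hc
    exact ih φ hm (h φ hm) c hc
  | hd φs ih =>
    rw [hornB_disj, Bool.and_eq_true, List.all_eq_true, decide_eq_true_eq] at h
    rw [cl_disj]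
    exact horn_foldr φs (fun φ hm => ih φ hm (h.1 φ hm)) h.2

end HornProofAux

/-- every Horn-NNF formula is equivalent to some Horn clausal formula,
and conversely every Horn clausal formula (viewed as an NNF) is Horn-NNF. -/
theorem hornNNF_semantically_equiv_horn {V : Type} :
    (∀ φ : NNF V, φ.hornB = true →
      ∃ cs : List (List (Lit V)), Clausal.isHorn cs ∧
        ∀ I : V → Bool, φ.eval I = Clausal.eval I cs) ∧
    (∀ cs : List (List (Lit V)), Clausal.isHorn cs →
      (NNF.conj (cs.map fun c => NNF.disj (c.map NNF.lit))).hornB = true) := by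
  constructor
  · intro φ h
    exact ⟨NNF.cl φ, HornProofAux.horn_cl φ h, fun I => HornProofAux.eval_cl φ I⟩
  · intro cs h
    rw [HornProofAux.hornB_conj, List.all_eq_true]
    intro ψ hm
    obtain ⟨c, hcm, rfl⟩ := List.mem_map.mp hm
    rw [HornProofAux.hornB_disj, Bool.and_eq_true, List.all_eq_true, decide_eq_true_eq]
    refine ⟨fun χ hmm => ?_, ?_⟩
    · obtain ⟨l, _, rfl⟩ := List.mem_map.mp hmm
      rw [NNF.hornB]
    · have hfm : ((c.map NNF.lit).filter fun φ => !NNF.negB φ)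
          = (c.filter Lit.isPos).map NNF.lit := by
        rw [List.filter_map]
        congr 1
        apply List.filter_congr
        intro l _
        simp [NNF.negB, Function.comp]
      rw [hfm, List.length_map]
      exact h c hcm
end

section
/- The NC unit-resolution inference is sound: if a formula has the form ℓ ∧ Π where Π contains an occurrence of a subformula (∨ C(ℓ̄) D) in which C(ℓ̄) is a formula logically equivalent to ℓ̄ ∧ ψ for some ψ (i.e., C(ℓ̄) becomes false whenever ℓ̄ is false), then ℓ ∧ Π is logically equivalent to ℓ ∧ Π′ where Π′ is Π with that occurrence of (∨ C(ℓ̄) D) replaced by D. -/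
def Lit.compl {V : Type} : Lit V → Lit V
  | .pos v => .neg v
  | .neg v => .pos v

/-- `Repl θ θ' P P'` : P' is P with one occurrence of the subformula θ
(at some position of the formula tree) replaced by θ'. -/
inductive Repl {V : Type} (θ θ' : NNF V) : NNF V → NNF V → Prop
  | here : Repl θ θ' θ θ'
  | conj (pre post : List (NNF V)) {φ φ' : NNF V} :
      Repl θ θ' φ φ' →
      Repl θ θ' (.conj (pre ++ φ :: post)) (.conj (pre ++ φ' :: post))
  | disj (pre post : List (NNF V)) {φ φ' : NNF V} :
      Repl θ θ' φ φ' →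
      Repl θ θ' (.disj (pre ++ φ :: post)) (.disj (pre ++ φ' :: post))

lemma attach_all_eq {α} (f : α → Bool) (φs : List α) :
    (φs.attach.all fun x => f ↑x) = φs.all f := by
  rw [Bool.eq_iff_iff, List.all_eq_true, List.all_eq_true]
  simp

lemma attach_any_eq {α} (f : α → Bool) (φs : List α) :
    (φs.attach.any fun x => f ↑x) = φs.any f := by
  rw [Bool.eq_iff_iff, List.any_eq_true, List.any_eq_true]
  simp

lemma eval_conj {V : Type} (I : V → Bool) (φs : List (NNF V)) :
    (NNF.conj φs).eval I = φs.all (NNF.eval I) := by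
  rw [NNF.eval]
  exact attach_all_eq _ _

lemma eval_disj {V : Type} (I : V → Bool) (φs : List (NNF V)) :
    (NNF.disj φs).eval I = φs.any (NNF.eval I) := by
  rw [NNF.eval]
  exact attach_any_eq _ _

/-- soundness of general NC unit-resolution. If C becomes false
whenever ℓ̄ is false, and P' is P with an occurrence of (∨ C D) replaced by D,
then ℓ ∧ P is logically equivalent to ℓ ∧ P'. -/
theorem UR_sound {V : Type} (ℓ : Lit V) (C D P P' : NNF V)
    (hC : ∀ I : V → Bool, (NNF.lit ℓ.compl).eval I = false → C.eval I = false)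
    (hrepl : Repl (NNF.disj [C, D]) D P P') :
    ∀ I : V → Bool,
      (NNF.conj [NNF.lit ℓ, P]).eval I = (NNF.conj [NNF.lit ℓ, P']).eval I := by
  intro I
  rw [eval_conj, eval_conj]
  simp only [List.all_cons, List.all_nil, Bool.and_true]
  by_cases hl : (NNF.lit ℓ).eval I = true
  · rw [hl]
    have hCf : C.eval I = false := by
      apply hC
      cases ℓ <;> simp_all [NNF.eval, Lit.compl]
    have key : P.eval I = P'.eval I := by
      clear hl
      induction hrepl with
      | here =>
        rw [eval_disj]
        simp [hCf]
      | conj pre post h ih =>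
        rw [eval_conj, eval_conj]
        simp [List.all_append, ih]
      | disj pre post h ih =>
        rw [eval_disj, eval_disj]
        simp [List.any_append, ih]
    rw [key]
  · simp at hl; rw [hl]; simp
end
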